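/- The reduction homomorphism Sp(2g,ℤ) → Sp(2g,𝔽₂) is surjective. -/

import Mathlib

/-!
A symplectic transvection `x ↦ x + ω(x, u) u` is defined over any commutative ring and reduces
mod 2 to the transvection of the reduced vector, so every transvection of `Sp(2g, 𝔽₂)` lifts;
it remains to see that transvections generate `Sp(2g, 𝔽₂)`. Over `𝔽₂` the transvections along
vectors of a nondegenerate subspace act transitively on its hyperbolic pairs `ω(x, y) = 1` while
fixing its orthogonal complement. Applying this to the span of the basis pairs `(e_i, f_i)` not yet
fixed, one moves `(N f_a, N e_a)` back to `(f_a, e_a)` pair by pair until `N` becomes the identity.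
-/

open Matrix

def Jmat (g : ℕ) (R : Type*) [CommRing R] :
    Matrix (Fin g ⊕ Fin g) (Fin g ⊕ Fin g) R :=
  Matrix.fromBlocks 0 1 (-1) 0

theorem ZMod.eq_one_of_ne_zero {a : ZMod 2} (ha : a ≠ 0) : a = 1 := Fin.eq_one_of_ne_zero a ha

namespace SymplecticGroup

variable {l R : Type*} [CommRing R]

variable (R) in
def supportedOn (s : Finset l) : Submodule R (l ⊕ l → R) where
  carrier := {v | ∀ i ∉ s, v (.inl i) = 0 ∧ v (.inr i) = 0}
  add_mem' hv hw i hi := by simp [hv i hi, hw i hi]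
  zero_mem' _ _ := ⟨rfl, rfl⟩
  smul_mem' c v hv i hi := by simp [hv i hi]

variable [DecidableEq l] {s : Finset l} {i : l}

theorem single_inl_mem_supportedOn (hi : i ∈ s) : Pi.single (.inl i) 1 ∈ supportedOn R s :=
  fun _ hj => ⟨by simp [(ne_of_mem_of_not_mem hi hj).symm], by simp⟩

theorem single_inr_mem_supportedOn (hi : i ∈ s) : Pi.single (.inr i) 1 ∈ supportedOn R s :=
  fun _ hj => ⟨by simp, by simp [(ne_of_mem_of_not_mem hi hj).symm]⟩

variable [Fintype l]

variable (l R) in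
def form : LinearMap.BilinForm R (l ⊕ l → R) := (J l R).toBilin'

local notation "ω" => form _ _

theorem form_apply (x y : l ⊕ l → R) : ω x y = x ⬝ᵥ J l R *ᵥ y :=
  toBilin'_apply' _ _ _

theorem form_eq_sum (x y : l ⊕ l → R) :
    ω x y = ∑ i, x (.inr i) * y (.inl i) - ∑ i, x (.inl i) * y (.inr i) := by
  simp [form_apply, J, dotProduct, mulVec, Fintype.sum_sum_type, fromBlocks, Matrix.one_apply]
  abel

theorem form_self (x : l ⊕ l → R) : ω x x = 0 := by
  simp [form_eq_sum, mul_comm]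

theorem form_swap (x y : l ⊕ l → R) : ω y x = -ω x y := by
  simp only [form_eq_sum, neg_sub, mul_comm]

theorem form_comm [CharP R 2] (x y : l ⊕ l → R) : ω y x = ω x y := by
  rw [form_swap, CharTwo.neg_eq]

theorem form_single_inl (v : l ⊕ l → R) (i : l) : ω v (Pi.single (.inl i) 1) = v (.inr i) := by
  simp [form_eq_sum, Pi.single_apply]

theorem form_single_inr (v : l ⊕ l → R) (i : l) : ω v (Pi.single (.inr i) 1) = -v (.inl i) := by
  simp [form_eq_sum, Pi.single_apply]

theorem mem_iff_form {A : Matrix (l ⊕ l) (l ⊕ l) R} :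
    A ∈ symplecticGroup l R ↔ ∀ x y, ω (A *ᵥ x) (A *ᵥ y) = ω x y := by
  have h : ∀ x y, ω (A *ᵥ x) (A *ᵥ y) = (Aᵀ * J l R * A).toBilin' x y := fun x y => by
    rw [← toBilin'_comp, LinearMap.BilinForm.comp_apply, toLin'_apply, toLin'_apply]
    rfl
  simp only [h, mem_iff']
  exact ⟨fun h' x y => by rw [h']; rfl, fun h' => toBilin'.injective (LinearMap.ext₂ h')⟩

theorem form_mulVec {A : Matrix (l ⊕ l) (l ⊕ l) R} (hA : A ∈ symplecticGroup l R)
    (x y : l ⊕ l → R) : ω (A *ᵥ x) (A *ᵥ y) = ω x y :=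
  mem_iff_form.1 hA x y

theorem one_add_vecMulVec_mulVec (u x : l ⊕ l → R) :
    (1 + vecMulVec u (J l R *ᵥ u)) *ᵥ x = x + ω x u • u := by
  rw [add_mulVec, one_mulVec, vecMulVec_mulVec, op_smul_eq_smul, form_apply, dotProduct_comm]

def transvection (u : l ⊕ l → R) : symplecticGroup l R :=
  ⟨1 + vecMulVec u (J l R *ᵥ u), mem_iff_form.2 fun x y => by
    simp only [one_add_vecMulVec_mulVec, map_add, map_smul, LinearMap.add_apply,
      LinearMap.smul_apply, smul_eq_mul, form_self, form_swap u y]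
    ring⟩

theorem transvection_mulVec (u x : l ⊕ l → R) : ↑(transvection u) *ᵥ x = x + ω x u • u :=
  one_add_vecMulVec_mulVec u x

theorem transvection_mulVec_of_form_eq_zero {u x : l ⊕ l → R} (h : ω x u = 0) :
    ↑(transvection u) *ᵥ x = x := by
  rw [transvection_mulVec, h, zero_smul, add_zero]

theorem transvection_add_mulVec [CharP R 2] {x y : l ⊕ l → R} (h : ω x y = 1) :
    ↑(transvection (x + y)) *ᵥ x = y := by
  rw [transvection_mulVec, map_add, form_self, zero_add, h, one_smul]
  ext i
  exact CharTwo.add_cancel_left _ _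

theorem transvection_mul_transvection_mulVec [CharP R 2] {x y z : l ⊕ l → R} (hxz : ω x z = 1)
    (hzy : ω z y = 1) : ↑(transvection (z + y) * transvection (x + z)) *ᵥ x = y := by
  rw [Submonoid.coe_mul, ← mulVec_mulVec, transvection_add_mulVec hxz, transvection_add_mulVec hzy]

theorem mulVec_inv_mulVec (A : symplecticGroup l R) (v : l ⊕ l → R) :
    (A : Matrix (l ⊕ l) (l ⊕ l) R) *ᵥ (↑A⁻¹ : Matrix (l ⊕ l) (l ⊕ l) R) *ᵥ v = v := by
  rw [mulVec_mulVec, ← Submonoid.coe_mul, mul_inv_cancel, Submonoid.coe_one, one_mulVec]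

theorem inv_mulVec_mulVec (A : symplecticGroup l R) (v : l ⊕ l → R) :
    (↑A⁻¹ : Matrix (l ⊕ l) (l ⊕ l) R) *ᵥ (A : Matrix (l ⊕ l) (l ⊕ l) R) *ᵥ v = v := by
  rw [mulVec_mulVec, ← Submonoid.coe_mul, inv_mul_cancel, Submonoid.coe_one, one_mulVec]

theorem ne_zero_of_form_eq_one [Nontrivial R] {x y : l ⊕ l → R} (h : ω x y = 1) : x ≠ 0 := by
  rintro rfl
  rw [map_zero, LinearMap.zero_apply] at h
  exact zero_ne_one h

section Closure

variable {W : Submodule R (l ⊕ l → R)} {A : symplecticGroup l R}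

theorem mulVec_mem_iff_of_mem_closure (hA : A ∈ Subgroup.closure (transvection '' W))
    (v : l ⊕ l → R) : ↑A *ᵥ v ∈ W ↔ v ∈ W := by
  induction hA using Subgroup.closure_induction generalizing v with
  | mem _ hT =>
    obtain ⟨w, hw, rfl⟩ := hT
    rw [transvection_mulVec]
    exact W.add_mem_iff_left (W.smul_mem _ hw)
  | one => simp
  | mul B C _ _ hB hC => simp [← mulVec_mulVec, hB, hC]
  | inv B _ hB => rw [← hB, mulVec_inv_mulVec]

theorem mulVec_eq_self_of_mem_closure (hA : A ∈ Subgroup.closure (transvection '' W))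
    {v : l ⊕ l → R} (hv : ∀ w ∈ W, ω v w = 0) : ↑A *ᵥ v = v := by
  induction hA using Subgroup.closure_induction with
  | mem _ hT =>
    obtain ⟨w, hw, rfl⟩ := hT
    exact transvection_mulVec_of_form_eq_zero (hv w hw)
  | one => simp
  | mul B C _ _ hB hC => simp [← mulVec_mulVec, hB, hC]
  | inv B _ hB => conv_lhs => rw [← hB, inv_mulVec_mulVec]

end Closure

section ZModTwo

variable {W : Submodule (ZMod 2) (l ⊕ l → ZMod 2)}

theorem exists_form_eq_one_form_eq_one (hW : ∀ x ∈ W, x ≠ 0 → ∃ z ∈ W, ω x z = 1)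
    {x y : l ⊕ l → ZMod 2} (hx : x ∈ W) (hy : y ∈ W) (hx₀ : x ≠ 0) (hy₀ : y ≠ 0) :
    ∃ z ∈ W, ω x z = 1 ∧ ω z y = 1 := by
  simp_rw [form_comm y]
  obtain ⟨z₁, hz₁, hxz₁⟩ := hW x hx hx₀
  obtain ⟨z₂, hz₂, hyz₂⟩ := hW y hy hy₀
  by_cases hyz₁ : ω y z₁ = 0
  · by_cases hxz₂ : ω x z₂ = 0
    · exact ⟨z₁ + z₂, W.add_mem hz₁ hz₂, by simp [hxz₁, hxz₂], by simp [hyz₁, hyz₂]⟩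
    · exact ⟨z₂, hz₂, ZMod.eq_one_of_ne_zero hxz₂, hyz₂⟩
  · exact ⟨z₁, hz₁, hxz₁, ZMod.eq_one_of_ne_zero hyz₁⟩

theorem exists_mem_closure_mulVec_eq (hW : ∀ x ∈ W, x ≠ 0 → ∃ z ∈ W, ω x z = 1)
    {x y : l ⊕ l → ZMod 2} (hx : x ∈ W) (hy : y ∈ W) (hx₀ : x ≠ 0) (hy₀ : y ≠ 0) :
    ∃ A : symplecticGroup l (ZMod 2), A ∈ Subgroup.closure (transvection '' W) ∧ ↑A *ᵥ x = y := by
  obtain ⟨z, hz, hxz, hzy⟩ := exists_form_eq_one_form_eq_one hW hx hy hx₀ hy₀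
  exact ⟨_, mul_mem (Subgroup.subset_closure ⟨_, W.add_mem hz hy, rfl⟩)
    (Subgroup.subset_closure ⟨_, W.add_mem hx hz, rfl⟩),
    transvection_mul_transvection_mulVec hxz hzy⟩

theorem exists_mem_closure_fix_mulVec_eq {x y v : l ⊕ l → ZMod 2} (hx : x ∈ W) (hy : y ∈ W)
    (hv : v ∈ W) (hvx : ω v x = 1) (hvy : ω v y = 1) :
    ∃ A : symplecticGroup l (ZMod 2),
      A ∈ Subgroup.closure (transvection '' W) ∧ ↑A *ᵥ v = v ∧ ↑A *ᵥ x = y := by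
  by_cases hxy : ω x y = 0
  · -- route `x ↦ v + y ↦ y`: both transvections are along vectors `ω`-orthogonal to `v`
    have hxz : ω x (v + y) = 1 := by simp [hxy, form_comm v x, hvx]
    have hzy : ω (v + y) y = 1 := by simp [form_self, hvy]
    have hvxz : ω v (x + (v + y)) = 0 := by simp [form_self, hvx, hvy, CharTwo.add_self_eq_zero]
    have hvzy : ω v (v + y + y) = 0 := by simp [form_self, hvy, CharTwo.add_self_eq_zero]
    refine ⟨_, mul_mem (Subgroup.subset_closure ⟨_, W.add_mem (W.add_mem hv hy) hy, rfl⟩)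
      (Subgroup.subset_closure ⟨_, W.add_mem hx (W.add_mem hv hy), rfl⟩), ?_,
      transvection_mul_transvection_mulVec hxz hzy⟩
    rw [Submonoid.coe_mul, ← mulVec_mulVec, transvection_mulVec_of_form_eq_zero hvxz,
      transvection_mulVec_of_form_eq_zero hvzy]
  · refine ⟨_, Subgroup.subset_closure ⟨_, W.add_mem hx hy, rfl⟩,
      transvection_mulVec_of_form_eq_zero ?_, transvection_add_mulVec (ZMod.eq_one_of_ne_zero hxy)⟩
    simp [hvx, hvy, CharTwo.add_self_eq_zero]

theorem exists_mem_closure_mulVec_eq_pair (hW : ∀ x ∈ W, x ≠ 0 → ∃ z ∈ W, ω x z = 1)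
    {x₁ x₂ y₁ y₂ : l ⊕ l → ZMod 2} (hx₁ : x₁ ∈ W) (hx₂ : x₂ ∈ W) (hy₁ : y₁ ∈ W) (hy₂ : y₂ ∈ W)
    (hx : ω x₁ x₂ = 1) (hy : ω y₁ y₂ = 1) :
    ∃ A : symplecticGroup l (ZMod 2),
      A ∈ Subgroup.closure (transvection '' W) ∧ ↑A *ᵥ x₁ = y₁ ∧ ↑A *ᵥ x₂ = y₂ := by
  obtain ⟨A, hA, hAx₁⟩ := exists_mem_closure_mulVec_eq hW hx₁ hy₁ (ne_zero_of_form_eq_one hx)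
    (ne_zero_of_form_eq_one hy)
  have hAx₂ : ω y₁ (↑A *ᵥ x₂) = 1 := by rw [← hAx₁, form_mulVec A.2, hx]
  obtain ⟨B, hB, hBy₁, hBx₂⟩ := exists_mem_closure_fix_mulVec_eq
    ((mulVec_mem_iff_of_mem_closure hA x₂).2 hx₂) hy₂ hy₁ hAx₂ hy
  refine ⟨B * A, mul_mem hB hA, ?_, ?_⟩ <;>
    simp only [Submonoid.coe_mul, ← mulVec_mulVec, hAx₁, hBy₁, hBx₂]

end ZModTwo

section Coordinates

theorem mem_supportedOn_iff_form {v : l ⊕ l → R} :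
    v ∈ supportedOn R s ↔
      ∀ i ∉ s, ω v (Pi.single (.inr i) 1) = 0 ∧ ω v (Pi.single (.inl i) 1) = 0 := by
  simp only [form_single_inl, form_single_inr, neg_eq_zero]
  rfl

def FixesBasisOutside (s : Finset l) (A : Matrix (l ⊕ l) (l ⊕ l) R) : Prop :=
  ∀ i ∉ s, A *ᵥ Pi.single (.inl i) 1 = Pi.single (.inl i) 1 ∧
    A *ᵥ Pi.single (.inr i) 1 = Pi.single (.inr i) 1

theorem mulVec_mem_supportedOn {A : Matrix (l ⊕ l) (l ⊕ l) R} (hA : A ∈ symplecticGroup l R)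
    (hfix : FixesBasisOutside s A) {v : l ⊕ l → R} (hv : v ∈ supportedOn R s) :
    A *ᵥ v ∈ supportedOn R s := by
  rw [mem_supportedOn_iff_form] at hv ⊢
  intro i hi
  rw [← (hfix i hi).1, ← (hfix i hi).2, form_mulVec hA, form_mulVec hA]
  exact hv i hi

theorem fixesBasisOutside_of_mem_closure {A : symplecticGroup l R}
    (hA : A ∈ Subgroup.closure (transvection '' supportedOn R s)) :
    FixesBasisOutside s (A : Matrix (l ⊕ l) (l ⊕ l) R) := fun i hi =>
  ⟨mulVec_eq_self_of_mem_closure hA fun w hw => by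
      rw [form_swap, form_single_inl, (hw i hi).2, neg_zero],
    mulVec_eq_self_of_mem_closure hA fun w hw => by
      rw [form_swap, form_single_inr, (hw i hi).1, neg_zero, neg_zero]⟩

theorem exists_form_eq_one_of_mem_supportedOn (x : l ⊕ l → ZMod 2) (hx : x ∈ supportedOn _ s)
    (hx₀ : x ≠ 0) : ∃ z ∈ supportedOn _ s, ω x z = 1 := by
  obtain ⟨j, hj⟩ := Function.ne_iff.1 hx₀
  have hj₁ := ZMod.eq_one_of_ne_zero hj
  rcases j with i | i
  · have hi : i ∈ s := by_contra fun hi => hj (hx i hi).1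
    exact ⟨_, single_inr_mem_supportedOn hi, by rw [form_single_inr, hj₁, CharTwo.neg_eq]⟩
  · have hi : i ∈ s := by_contra fun hi => hj (hx i hi).2
    exact ⟨_, single_inl_mem_supportedOn hi, by rw [form_single_inl, hj₁]⟩

end Coordinates

theorem mem_closure_of_fixesBasisOutside (s : Finset l) {N : symplecticGroup l (ZMod 2)}
    (hN : FixesBasisOutside s (N : Matrix (l ⊕ l) (l ⊕ l) (ZMod 2))) :
    N ∈ Subgroup.closure (Set.range transvection) := by
  induction s using Finset.induction_on generalizing N with
  | empty =>
    have : N = 1 := Subtype.ext <| ext_of_mulVec_single fun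
      | .inl i => by rw [Submonoid.coe_one, one_mulVec]; exact (hN i (Finset.notMem_empty i)).1
      | .inr i => by rw [Submonoid.coe_one, one_mulVec]; exact (hN i (Finset.notMem_empty i)).2
    rw [this]
    exact one_mem _
  | insert a s ha ih =>
    have ha' := Finset.mem_insert_self a s
    obtain ⟨A, hA, hAf, hAe⟩ := exists_mem_closure_mulVec_eq_pair
      exists_form_eq_one_of_mem_supportedOn
      (mulVec_mem_supportedOn N.2 hN (single_inr_mem_supportedOn ha'))
      (mulVec_mem_supportedOn N.2 hN (single_inl_mem_supportedOn ha'))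
      (single_inr_mem_supportedOn ha') (single_inl_mem_supportedOn ha')
      (by rw [form_mulVec N.2, form_single_inl, Pi.single_eq_same])
      (by rw [form_single_inl, Pi.single_eq_same])
    have hAN : FixesBasisOutside s (↑(A * N) : Matrix (l ⊕ l) (l ⊕ l) (ZMod 2)) := by
      intro i hi
      simp only [Submonoid.coe_mul, ← mulVec_mulVec]
      by_cases hia : i = a
      · subst hia
        exact ⟨hAe, hAf⟩
      · have hi' : i ∉ insert a s := by simp [hi, hia]
        rw [(hN i hi').1, (hN i hi').2]
        exact fixesBasisOutside_of_mem_closure hA i hi'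
    have hA' := Subgroup.closure_mono (Set.image_subset_range _ _) hA
    simpa using mul_mem (inv_mem hA') (ih hAN)

theorem closure_range_transvection_eq_top :
    Subgroup.closure (Set.range (transvection : (l ⊕ l → ZMod 2) → symplecticGroup l (ZMod 2))) =
      ⊤ :=
  eq_top_iff.2 fun _ _ =>
    mem_closure_of_fixesBasisOutside Finset.univ fun i hi => absurd (Finset.mem_univ i) hi

section Map

variable {S : Type*} [CommRing S]

def map (f : R →+* S) : symplecticGroup l R →* symplecticGroup l S where
  toFun A := ⟨(A : Matrix (l ⊕ l) (l ⊕ l) R).map f, map_mem A.2 f⟩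
  map_one' := Subtype.ext (by simp)
  map_mul' A B := Subtype.ext Matrix.map_mul

theorem map_transvection (f : R →+* S) (u : l ⊕ l → R) :
    map f (transvection u) = transvection (f ∘ u) := by
  refine Subtype.ext ?_
  ext i j
  simp [map, transvection, Matrix.map_apply, vecMulVec_apply, Matrix.one_apply, apply_ite f,
    RingHom.map_mulVec]

end Map

theorem map_intCast_surjective :
    Function.Surjective (map (Int.castRingHom (ZMod 2)) : symplecticGroup l ℤ →* _) := by
  rw [← MonoidHom.range_eq_top, eq_top_iff, ← closure_range_transvection_eq_top,
    Subgroup.closure_le]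
  rintro _ ⟨u, rfl⟩
  obtain ⟨v, rfl⟩ := ZMod.intCast_surjective.comp_left u
  exact ⟨transvection v, map_transvection _ v⟩

end SymplecticGroup

theorem Jmat_eq_neg_J (g : ℕ) (R : Type*) [CommRing R] : Jmat g R = -J (Fin g) R := by
  simp [Jmat, J, fromBlocks_neg]

theorem mem_symplecticGroup_iff_Jmat {g : ℕ} {R : Type*} [CommRing R]
    {X : Matrix (Fin g ⊕ Fin g) (Fin g ⊕ Fin g) R} :
    X ∈ symplecticGroup (Fin g) R ↔ Xᵀ * Jmat g R * X = Jmat g R := by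
  rw [SymplecticGroup.mem_iff', Jmat_eq_neg_J, Matrix.mul_neg, Matrix.neg_mul, neg_inj]

theorem stmt14_general (g : ℕ)
    (M : Matrix (Fin g ⊕ Fin g) (Fin g ⊕ Fin g) (ZMod 2))
    (hM : Mᵀ * Jmat g (ZMod 2) * M = Jmat g (ZMod 2)) :
    ∃ X : Matrix (Fin g ⊕ Fin g) (Fin g ⊕ Fin g) ℤ,
      Xᵀ * Jmat g ℤ * X = Jmat g ℤ ∧ X.map (Int.cast : ℤ → ZMod 2) = M := by
  obtain ⟨X, hX⟩ := SymplecticGroup.map_intCast_surjective ⟨M, mem_symplecticGroup_iff_Jmat.2 hM⟩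
  exact ⟨X, mem_symplecticGroup_iff_Jmat.1 X.2, congrArg Subtype.val hX⟩

/-- The reduction map `Sp(2g,ℤ) → Sp(2g,𝔽₂)` is surjective: every symplectic matrix
over `𝔽₂` lifts to a symplectic integer matrix. -/
theorem stmt14 (g : ℕ) (hg : 1 ≤ g)
    (M : Matrix (Fin g ⊕ Fin g) (Fin g ⊕ Fin g) (ZMod 2))
    (hM : Mᵀ * Jmat g (ZMod 2) * M = Jmat g (ZMod 2)) :
    ∃ X : Matrix (Fin g ⊕ Fin g) (Fin g ⊕ Fin g) ℤ,
      Xᵀ * Jmat g ℤ * X = Jmat g ℤ ∧ X.map (Int.cast : ℤ → ZMod 2) = M :=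
  stmt14_general g M hM
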